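/- arXiv:1704.04510 — 3 statements merged into one kernel-verified Lean document; each statement's English description precedes it below -/
import Mathlib

section
/- Let d ≥ 1 and let N be a d-small FS^op-module. If λ is a partition of n and Hom_{S_n}(V_λ, N(n)) ≠ 0, then λ has at most d parts, i.e., ℓ(λ) ≤ d. -/
open CategoryTheory

/-- An object of the category `FS`: a nonempty finite set. -/
structure FSObj : Type 1 where
  carrier : Type
  [fintype : Fintype carrier]
  [nonempty : Nonempty carrier]

attribute [instance] FSObj.fintype FSObj.nonempty

instance : CoeSort FSObj Type := ⟨FSObj.carrier⟩

/-- The category `FS` of nonempty finite sets with surjective maps. -/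
instance : Category FSObj where
  Hom A B := {f : A → B // Function.Surjective f}
  id A := ⟨id, Function.surjective_id⟩
  comp f g := ⟨g.1 ∘ f.1, g.2.comp f.2⟩

/-- The standard object `[n] = {1, …, n}` of `FS`, modeled as `Fin n`, for `n ≥ 1`. -/
def FSn (n : ℕ) [NeZero n] : FSObj := ⟨Fin n⟩

/-- An `FSᵒᵖ`-module: a contravariant functor from `FS` to complex vector spaces. -/
abbrev FSopModule : Type 1 := FSObjᵒᵖ ⥤ ModuleCat.{0} ℂ

/-- The value `N(n) := N([n])` of an `FSᵒᵖ`-module at `[n]`, as a representation of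
the symmetric group `S_n = Aut([n])`. -/
def FSopModule.val (N : FSopModule) (n : ℕ) [NeZero n] : ModuleCat ℂ :=
  N.obj (Opposite.op (FSn n))

/-- The dimension of `N([n])`, with the junk value `0` when `n = 0`. -/
noncomputable def FSopModule.dim (N : FSopModule) : ℕ → ℕ
  | 0 => 0
  | (n + 1) => Module.finrank ℂ (N.val (n + 1))

/-- The principal projective `FSᵒᵖ`-module at an object `A`, sending a finite set `E` to
the complex vector space with basis the set of surjections `E ↠ A`.  The principal
projective `P_m` of the paper is `PP (FSn m)`. -/
@[simps]
noncomputable def PP (A : FSObj) : FSopModule where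
  obj E := ModuleCat.of ℂ ((E.unop ⟶ A) →₀ ℂ)
  map {E E'} g := ModuleCat.ofHom (Finsupp.lmapDomain ℂ ℂ (fun f => g.unop ≫ f))
  map_id _ := ModuleCat.hom_ext (LinearMap.ext fun _ => Finsupp.mapDomain_id)
  map_comp g h := ModuleCat.hom_ext (LinearMap.ext fun _ =>
    (Finsupp.mapDomain_comp (f := fun f => g.unop ≫ f) (g := fun f => h.unop ≫ f)))

/-- The object `[m]` together with a positivity proof. -/
def finObj (m : ℕ) (h : 1 ≤ m) : FSObj :=
  { carrier := Fin m, nonempty := ⟨⟨0, h⟩⟩ }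

/-- An `FSᵒᵖ`-module is finitely generated in degrees `≤ d` if it is the quotient of a
finite direct sum of principal projectives `P_m` with `m ≤ d`; equivalently, if there is
a finite family of maps from such principal projectives whose images jointly span. -/
def FinGenLE (d : ℕ) (N : FSopModule) : Prop :=
  ∃ (k : ℕ) (m : Fin k → ℕ) (hm : ∀ i, 1 ≤ m i ∧ m i ≤ d)
    (T : ∀ i : Fin k, PP (finObj (m i) (hm i).1) ⟶ N),
    ∀ E : FSObjᵒᵖ, (⨆ i : Fin k, LinearMap.range ((T i).app E).hom) = ⊤

/-- An `FSᵒᵖ`-module is `d`-small if it is a subquotient of an `FSᵒᵖ`-module that is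
finitely generated in degrees `≤ d`. -/
def IsSmall (d : ℕ) (N : FSopModule) : Prop :=
  ∃ (M M₀ : FSopModule) (_ : FinGenLE d M) (ι : M₀ ⟶ M) (π : M₀ ⟶ N),
    (∀ E : FSObjᵒᵖ, Function.Injective (ι.app E)) ∧
    (∀ E : FSObjᵒᵖ, Function.Surjective (π.app E))
open Equiv

/-- Row index of the box numbered `i` in the canonical (row-by-row) filling of the Young
diagram with row lengths `L`. -/
def rowIdx : List ℕ → ℕ → ℕ
  | [], _ => 0
  | a :: L, i => if i < a then 0 else rowIdx L (i - a) + 1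

/-- Column index of the box numbered `i` in the canonical (row-by-row) filling of the
Young diagram with row lengths `L`. -/
def colIdx : List ℕ → ℕ → ℕ
  | [], i => i
  | a :: L, i => if i < a then i else colIdx L (i - a)

/-- The parts of a partition, sorted in weakly decreasing order. -/
def sortedParts {n : ℕ} (lam : n.Partition) : List ℕ :=
  (Multiset.sort lam.parts (· ≤ ·)).reverse

/-- The row of the entry `i` in the canonical tableau of shape `lam`. -/
def tabRow {n : ℕ} (lam : n.Partition) (i : Fin n) : ℕ := rowIdx (sortedParts lam) i.1

/-- The column of the entry `i` in the canonical tableau of shape `lam`. -/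
def tabCol {n : ℕ} (lam : n.Partition) (i : Fin n) : ℕ := colIdx (sortedParts lam) i.1

/-- The row group of the canonical tableau of shape `lam`: permutations preserving
each row. -/
def rowGroup {n : ℕ} (lam : n.Partition) : Finset (Perm (Fin n)) :=
  Finset.univ.filter fun σ => ∀ i, tabRow lam (σ i) = tabRow lam i

/-- The column group of the canonical tableau of shape `lam`: permutations preserving
each column. -/
def colGroup {n : ℕ} (lam : n.Partition) : Finset (Perm (Fin n)) :=
  Finset.univ.filter fun σ => ∀ i, tabCol lam (σ i) = tabCol lam i

/-- The Young symmetrizer of the canonical tableau of shape `lam`, namely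
`e_λ = (∑_{q ∈ C_λ} sgn(q)·q) · (∑_{p ∈ R_λ} p)` in the group algebra `ℂ[S_n]`. -/
noncomputable def youngSymmetrizer {n : ℕ} (lam : n.Partition) :
    MonoidAlgebra ℂ (Perm (Fin n)) :=
  (∑ σ ∈ colGroup lam, ((Perm.sign σ : ℤ) : ℂ) • MonoidAlgebra.of ℂ (Perm (Fin n)) σ) *
    (∑ σ ∈ rowGroup lam, MonoidAlgebra.of ℂ (Perm (Fin n)) σ)

/-- The Specht module `V_λ`, realized as the left ideal `ℂ[S_n]·e_λ` generated by the
Young symmetrizer, i.e. the range of right multiplication by `e_λ`. -/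
noncomputable def SpechtSub {n : ℕ} (lam : n.Partition) :
    Submodule ℂ (MonoidAlgebra ℂ (Perm (Fin n))) :=
  LinearMap.range (LinearMap.mulRight ℂ (youngSymmetrizer lam))

/-- The left action of `g ∈ S_n` on the Specht module `V_λ = ℂ[S_n]·e_λ`. -/
noncomputable def spechtSmul {n : ℕ} (lam : n.Partition) (g : Perm (Fin n))
    (x : SpechtSub lam) : SpechtSub lam :=
  ⟨MonoidAlgebra.of ℂ (Perm (Fin n)) g * x.1, by
    obtain ⟨b, hb⟩ := x.2
    exact ⟨MonoidAlgebra.of ℂ (Perm (Fin n)) g * b, by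
      simp only [LinearMap.mulRight_apply] at hb ⊢
      rw [mul_assoc, hb]⟩⟩

/-- The morphism `[n] ⟶ [n]` of `FS` corresponding to a permutation `g ∈ S_n`. -/
def permHom {n : ℕ} [NeZero n] (g : Perm (Fin n)) : FSn n ⟶ FSn n := ⟨g, g.surjective⟩

/-- The action of `S_n = Aut([n])` on the value `N(n)` of an `FSᵒᵖ`-module:
`g` acts as the structure map induced by `g⁻¹`. -/
noncomputable def permAction (N : FSopModule) (n : ℕ) [NeZero n] (g : Perm (Fin n)) :
    N.val n →ₗ[ℂ] N.val n :=
  (N.map (Quiver.Hom.op (permHom g⁻¹))).hom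

/-- A linear map `V_λ → N(n)` is `S_n`-equivariant if it intertwines the left action of
`S_n` on `V_λ = ℂ[S_n]·e_λ` with the action on `N(n)`. -/
def IsEquivariant {n : ℕ} [NeZero n] (lam : n.Partition) (N : FSopModule)
    (φ : SpechtSub lam →ₗ[ℂ] N.val n) : Prop :=
  ∀ (g : Perm (Fin n)) (x : SpechtSub lam),
    φ (spechtSmul lam g x) = permAction N n g (φ x)

/-- The space `Hom_{S_n}(V_λ, N(n))` of equivariant linear maps. -/
noncomputable def equivariantHom {n : ℕ} [NeZero n] (lam : n.Partition) (N : FSopModule) :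
    Submodule ℂ ((SpechtSub lam) →ₗ[ℂ] N.val n) where
  carrier := {φ | IsEquivariant lam N φ}
  add_mem' := by
    intro φ ψ hφ hψ g x
    simp [hφ g x, hψ g x]
  zero_mem' := by intro g x; simp
  smul_mem' := by
    intro c φ hφ g x
    simp [hφ g x]

/-! If `λ` has more than `d` rows, the column antisymmetrizer `c_λ = ∑_{q ∈ C_λ} sgn(q) q` acts
by zero on `P_m(n)` for every `m ≤ d`: a surjection `[n] ↠ [m]` identifies two entries of the
first column, and the transposition swapping them fixes the corresponding basis vector while
reversing the sign of `c_λ`. Acting by zero passes to quotients, sums and subobjects, hence to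
`N(n)`. On the other hand `c_λ e_λ = |C_λ| e_λ`, so an equivariant `φ : V_λ → N(n)` satisfies
`|C_λ| φ(e_λ) = c_λ φ(e_λ) = 0`; as `e_λ` generates `V_λ`, `φ = 0`. -/

open Equiv Finset

lemma exists_rowIdx_eq_colIdx_eq_zero :
    ∀ (L : List ℕ), (∀ a ∈ L, 0 < a) → ∀ k < L.length,
      ∃ i < L.sum, rowIdx L i = k ∧ colIdx L i = 0
  | [], _, k, hk => absurd hk (Nat.not_lt_zero k)
  | a :: L, hL, 0, _ => ⟨0, by simp [hL a (by simp)], by simp [rowIdx, colIdx, hL a (by simp)]⟩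
  | a :: L, hL, k + 1, hk => by
    obtain ⟨i, hi, hrow, hcol⟩ :=
      exists_rowIdx_eq_colIdx_eq_zero L (fun b hb => hL b (by simp [hb])) k (by simpa using hk)
    refine ⟨i + a, by simp; omega, ?_, ?_⟩ <;> simp [rowIdx, colIdx, hrow, hcol]

lemma exists_ne_tabCol_eq_and_map_eq_of_card_lt {n : ℕ} {α : Type*} [Fintype α]
    (lam : n.Partition) (f : Fin n → α) (hα : Fintype.card α < Multiset.card lam.parts) :
    ∃ i j, i ≠ j ∧ tabCol lam i = tabCol lam j ∧ f i = f j := by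
  have hL : ∀ a ∈ sortedParts lam, 0 < a := fun a ha =>
    lam.parts_pos (by simpa [sortedParts, Multiset.mem_sort] using ha)
  have hsum : (sortedParts lam).sum = n := by
    rw [sortedParts, List.sum_reverse, ← Multiset.sum_coe, Multiset.sort_eq, lam.parts_sum]
  have hlen : (sortedParts lam).length = Multiset.card lam.parts := by
    rw [sortedParts, List.length_reverse, Multiset.length_sort]
  choose e he hrow hcol using fun k : Fin (Multiset.card lam.parts) =>
    exists_rowIdx_eq_colIdx_eq_zero _ hL k (hlen.symm ▸ k.2)
  let firstCol (k : Fin (Multiset.card lam.parts)) : Fin n := ⟨e k, hsum ▸ he k⟩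
  obtain ⟨k, k', hkk', hf⟩ := Fintype.exists_ne_map_eq_of_card_lt (f ∘ firstCol) (by simpa)
  refine ⟨firstCol k, firstCol k', fun h => hkk' (Fin.ext ?_), ?_, hf⟩
  · simpa [firstCol, hrow] using congrArg (rowIdx (sortedParts lam) ∘ Fin.val) h
  · simp [tabCol, firstCol, hcol]

lemma intCast_units_mul_self {R : Type*} [Ring R] (u : ℤˣ) : ((u : ℤ) : R) * (u : ℤ) = 1 := by
  rw [← Int.cast_mul, ← Units.val_mul, Int.units_mul_self, Units.val_one, Int.cast_one]

section ColumnGroup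

variable {n : ℕ} (lam : n.Partition)

lemma one_mem_colGroup : (1 : Perm (Fin n)) ∈ colGroup lam := by
  simp [colGroup]

variable {lam}

lemma mul_mem_colGroup {p q : Perm (Fin n)} (hp : p ∈ colGroup lam) (hq : q ∈ colGroup lam) :
    p * q ∈ colGroup lam := by
  simp only [colGroup, mem_filter, mem_univ, true_and] at *
  intro i
  simpa [hq i] using hp (q i)

lemma inv_mem_colGroup {q : Perm (Fin n)} (hq : q ∈ colGroup lam) : q⁻¹ ∈ colGroup lam := by
  simp only [colGroup, mem_filter, mem_univ, true_and] at *
  intro i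
  simpa using (hq (q⁻¹ i)).symm

lemma swap_mem_colGroup {i j : Fin n} (h : tabCol lam i = tabCol lam j) :
    swap i j ∈ colGroup lam := by
  simp only [colGroup, mem_filter, mem_univ, true_and]
  intro k
  rcases eq_or_ne k i with rfl | hki
  · simp [h]
  rcases eq_or_ne k j with rfl | hkj
  · simp [h]
  · rw [swap_apply_of_ne_of_ne hki hkj]

end ColumnGroup

section ColumnAntisymmetrizer

variable {n : ℕ} (lam : n.Partition)

noncomputable def colAntisymmetrizer : MonoidAlgebra ℂ (Perm (Fin n)) :=
  ∑ σ ∈ colGroup lam, ((Perm.sign σ : ℤ) : ℂ) • MonoidAlgebra.of ℂ (Perm (Fin n)) σ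

lemma youngSymmetrizer_eq_colAntisymmetrizer_mul :
    youngSymmetrizer lam =
      colAntisymmetrizer lam * ∑ σ ∈ rowGroup lam, MonoidAlgebra.of ℂ (Perm (Fin n)) σ :=
  rfl

variable {lam} in
lemma colAntisymmetrizer_mul_of {q : Perm (Fin n)} (hq : q ∈ colGroup lam) :
    colAntisymmetrizer lam * MonoidAlgebra.of ℂ (Perm (Fin n)) q =
      ((Perm.sign q : ℤ) : ℂ) • colAntisymmetrizer lam := by
  rw [colAntisymmetrizer, sum_mul, smul_sum]
  refine sum_nbij' (· * q) (· * q⁻¹) (fun σ hσ => mul_mem_colGroup hσ hq)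
    (fun σ hσ => mul_mem_colGroup hσ (inv_mem_colGroup hq)) (fun σ _ => by simp)
    (fun σ _ => by simp) fun σ _ => ?_
  rw [smul_mul_assoc, ← map_mul, smul_smul, Perm.sign_mul, Units.val_mul, Int.cast_mul,
    mul_left_comm, intCast_units_mul_self, mul_one]

lemma colAntisymmetrizer_mul_self :
    colAntisymmetrizer lam * colAntisymmetrizer lam =
      ((colGroup lam).card : ℂ) • colAntisymmetrizer lam := by
  conv_lhs => arg 2; rw [colAntisymmetrizer]
  rw [mul_sum, sum_congr rfl fun q hq => by
    rw [mul_smul_comm, colAntisymmetrizer_mul_of hq, smul_smul, intCast_units_mul_self, one_smul],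
    sum_const, Nat.cast_smul_eq_nsmul]

lemma colAntisymmetrizer_mul_youngSymmetrizer :
    colAntisymmetrizer lam * youngSymmetrizer lam =
      ((colGroup lam).card : ℂ) • youngSymmetrizer lam := by
  rw [youngSymmetrizer_eq_colAntisymmetrizer_mul, ← mul_assoc, colAntisymmetrizer_mul_self,
    smul_mul_assoc]

end ColumnAntisymmetrizer

lemma Representation.asAlgebraHom_colAntisymmetrizer_apply_eq_zero {n : ℕ}
    {lam : n.Partition} {V : Type*} [AddCommGroup V] [Module ℂ V]
    (ρ : Representation ℂ (Perm (Fin n)) V) {i j : Fin n} (hij : i ≠ j)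
    (hcol : tabCol lam i = tabCol lam j) {v : V} (hv : ρ (swap i j) v = v) :
    ρ.asAlgebraHom (colAntisymmetrizer lam) v = 0 := by
  have hneg : ρ.asAlgebraHom (colAntisymmetrizer lam) v =
      -ρ.asAlgebraHom (colAntisymmetrizer lam) v := by
    conv_lhs => rw [← hv, ← ρ.asAlgebraHom_of, ← Module.End.mul_apply, ← map_mul,
      colAntisymmetrizer_mul_of (swap_mem_colGroup hcol)]
    simp [Perm.sign_swap hij]
  have htwo : (2 : ℂ) • ρ.asAlgebraHom (colAntisymmetrizer lam) v = 0 := by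
    rw [two_smul]
    nth_rw 1 [hneg]
    exact neg_add_cancel _
  exact (smul_eq_zero.1 htwo).resolve_left two_ne_zero

noncomputable def permRep (N : FSopModule) (n : ℕ) [NeZero n] :
    Representation ℂ (Perm (Fin n)) (N.val n) where
  toFun := permAction N n
  map_one' := by
    change (N.map (𝟙 _)).hom = LinearMap.id
    rw [N.map_id]
    rfl
  map_mul' g h := by
    change (N.map ((permHom h⁻¹).op ≫ (permHom g⁻¹).op)).hom = _
    rw [N.map_comp]
    rfl

section PermRepresentation

variable {n : ℕ} [NeZero n]

-- `α.app` at `[n]`, typed on `FSopModule.val` so that it intertwines the `permRep`s.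
noncomputable def valMap {X Y : FSopModule} (α : X ⟶ Y) (n : ℕ) [NeZero n] :
    X.val n →ₗ[ℂ] Y.val n :=
  (α.app (Opposite.op (FSn n))).hom

lemma permRep_naturality {X Y : FSopModule} (α : X ⟶ Y) (g : Perm (Fin n)) (v : X.val n) :
    valMap α n (permRep X n g v) = permRep Y n g (valMap α n v) :=
  congrArg (fun f => f.hom v) (α.naturality (permHom g⁻¹).op)

lemma asAlgebraHom_permRep_naturality {X Y : FSopModule} (α : X ⟶ Y)
    (a : MonoidAlgebra ℂ (Perm (Fin n))) (v : X.val n) :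
    valMap α n ((permRep X n).asAlgebraHom a v) =
      (permRep Y n).asAlgebraHom a (valMap α n v) := by
  induction a using MonoidAlgebra.induction_on with
  | of g => simpa only [Representation.asAlgebraHom_of] using permRep_naturality α g v
  | add a b ha hb => simp only [map_add, LinearMap.add_apply, ha, hb]
  | smul r a ha => simp only [map_smul, LinearMap.smul_apply, ha]

end PermRepresentation

section Annihilation

variable {n : ℕ} [NeZero n] {a : MonoidAlgebra ℂ (Perm (Fin n))}

lemma asAlgebraHom_permRep_eq_zero_of_injective {X Y : FSopModule} (ι : X ⟶ Y)
    (hι : Function.Injective (valMap ι n)) (hY : (permRep Y n).asAlgebraHom a = 0) :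
    (permRep X n).asAlgebraHom a = 0 := by
  ext v
  apply hι
  rw [asAlgebraHom_permRep_naturality, hY, LinearMap.zero_apply, LinearMap.zero_apply, map_zero]

lemma asAlgebraHom_permRep_eq_zero_of_surjective {X Y : FSopModule} (π : X ⟶ Y)
    (hπ : Function.Surjective (valMap π n)) (hX : (permRep X n).asAlgebraHom a = 0) :
    (permRep Y n).asAlgebraHom a = 0 := by
  ext v
  obtain ⟨w, rfl⟩ := hπ v
  rw [← asAlgebraHom_permRep_naturality, hX, LinearMap.zero_apply, LinearMap.zero_apply, map_zero]

lemma asAlgebraHom_permRep_eq_zero_of_iSup_range_eq_top {I : Type*} {X : I → FSopModule}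
    {Y : FSopModule} (T : ∀ i, X i ⟶ Y) (hT : ⨆ i, LinearMap.range (valMap (T i) n) = ⊤)
    (hX : ∀ i, (permRep (X i) n).asAlgebraHom a = 0) :
    (permRep Y n).asAlgebraHom a = 0 := by
  rw [← LinearMap.ker_eq_top, eq_top_iff, ← hT]
  refine iSup_le fun i => ?_
  rintro _ ⟨w, rfl⟩
  rw [LinearMap.mem_ker, ← asAlgebraHom_permRep_naturality, hX i, LinearMap.zero_apply, map_zero]

lemma FinGenLE.asAlgebraHom_permRep_eq_zero {d : ℕ} {M : FSopModule} (hM : FinGenLE d M)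
    (hP : ∀ A : FSObj, Fintype.card A ≤ d → (permRep (PP A) n).asAlgebraHom a = 0) :
    (permRep M n).asAlgebraHom a = 0 := by
  obtain ⟨k, m, hm, T, hT⟩ := hM
  exact asAlgebraHom_permRep_eq_zero_of_iSup_range_eq_top T (hT _) fun i =>
    hP _ ((Fintype.card_fin (m i)).trans_le (hm i).2)

lemma IsSmall.asAlgebraHom_permRep_eq_zero {d : ℕ} {N : FSopModule} (hN : IsSmall d N)
    (hP : ∀ A : FSObj, Fintype.card A ≤ d → (permRep (PP A) n).asAlgebraHom a = 0) :
    (permRep N n).asAlgebraHom a = 0 := by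
  obtain ⟨M, M₀, hM, ι, π, hι, hπ⟩ := hN
  exact asAlgebraHom_permRep_eq_zero_of_surjective π (hπ _)
    (asAlgebraHom_permRep_eq_zero_of_injective ι (hι _) (hM.asAlgebraHom_permRep_eq_zero hP))

end Annihilation

lemma asAlgebraHom_permRep_PP_colAntisymmetrizer_eq_zero {n : ℕ} [NeZero n]
    {lam : n.Partition} (A : FSObj) (hA : Fintype.card A < Multiset.card lam.parts) :
    (permRep (PP A) n).asAlgebraHom (colAntisymmetrizer lam) = 0 := by
  refine Finsupp.lhom_ext fun f z => ?_
  obtain ⟨i, j, hij, hcol, hf⟩ := exists_ne_tabCol_eq_and_map_eq_of_card_lt lam f.1 hA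
  refine (permRep (PP A) n).asAlgebraHom_colAntisymmetrizer_apply_eq_zero hij hcol ?_
  change Finsupp.mapDomain _ (Finsupp.single f z) = _
  rw [Finsupp.mapDomain_single]
  congr 1
  refine Subtype.ext (funext fun (x : Fin n) => ?_)
  change f.1 ((swap i j)⁻¹ x) = f.1 x
  rw [swap_inv, swap_apply_def]
  split_ifs with hxi hxj
  · rw [hxi, hf]
  · rw [hxj, hf]
  · rfl

section Equivariance

variable {n : ℕ} {lam : n.Partition}

lemma mul_mem_spechtSub (a : MonoidAlgebra ℂ (Perm (Fin n)))
    {x : MonoidAlgebra ℂ (Perm (Fin n))} (hx : x ∈ SpechtSub lam) : a * x ∈ SpechtSub lam := by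
  obtain ⟨b, rfl⟩ := hx
  exact ⟨a * b, by simp [mul_assoc]⟩

lemma youngSymmetrizer_mem_spechtSub (lam : n.Partition) :
    youngSymmetrizer lam ∈ SpechtSub lam :=
  ⟨1, one_mul _⟩

variable [NeZero n]

lemma IsEquivariant.map_mul {N : FSopModule} {φ : SpechtSub lam →ₗ[ℂ] N.val n}
    (hφ : IsEquivariant lam N φ) (a : MonoidAlgebra ℂ (Perm (Fin n))) (x : SpechtSub lam) :
    φ ⟨a * x, mul_mem_spechtSub a x.2⟩ = (permRep N n).asAlgebraHom a (φ x) := by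
  induction a using MonoidAlgebra.induction_on with
  | of g =>
    rw [Representation.asAlgebraHom_of]
    exact hφ g x
  | add a b ha hb =>
    rw [show (⟨(a + b) * x, _⟩ : SpechtSub lam) =
        ⟨a * x, mul_mem_spechtSub a x.2⟩ + ⟨b * x, mul_mem_spechtSub b x.2⟩ from
      Subtype.ext (add_mul a b x), map_add, ha, hb, map_add, LinearMap.add_apply]
  | smul r a ha =>
    rw [show (⟨(r • a) * x, _⟩ : SpechtSub lam) = r • ⟨a * x, mul_mem_spechtSub a x.2⟩ from
      Subtype.ext (smul_mul_assoc r a x), map_smul, ha, map_smul, LinearMap.smul_apply]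

lemma IsEquivariant.eq_zero_of_asAlgebraHom_colAntisymmetrizer_eq_zero {N : FSopModule}
    {φ : SpechtSub lam →ₗ[ℂ] N.val n} (hφ : IsEquivariant lam N φ)
    (hN : (permRep N n).asAlgebraHom (colAntisymmetrizer lam) = 0) : φ = 0 := by
  let e : SpechtSub lam := ⟨youngSymmetrizer lam, youngSymmetrizer_mem_spechtSub lam⟩
  have he : φ e = 0 := by
    have hce := hφ.map_mul (colAntisymmetrizer lam) e
    rw [show (⟨colAntisymmetrizer lam * e, _⟩ : SpechtSub lam) = ((colGroup lam).card : ℂ) • e from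
      Subtype.ext (colAntisymmetrizer_mul_youngSymmetrizer lam), map_smul, hN,
      LinearMap.zero_apply] at hce
    exact (smul_eq_zero.1 hce).resolve_left
      (Nat.cast_ne_zero.2 (card_ne_zero_of_mem (one_mem_colGroup lam)))
  ext ⟨_, b, rfl⟩
  simpa [he] using hφ.map_mul b e

end Equivariance

theorem parts_le_of_equivariantHom_ne_zero_general (d : ℕ) (N : FSopModule)
    (hN : IsSmall d N) (n : ℕ) [NeZero n] (lam : n.Partition)
    (h : ∃ φ ∈ equivariantHom lam N, φ ≠ 0) :
    Multiset.card lam.parts ≤ d := by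
  by_contra! hlt
  obtain ⟨φ, hφ, hφ0⟩ := h
  exact hφ0 <| IsEquivariant.eq_zero_of_asAlgebraHom_colAntisymmetrizer_eq_zero hφ <|
    hN.asAlgebraHom_permRep_eq_zero fun A hA =>
      asAlgebraHom_permRep_PP_colAntisymmetrizer_eq_zero A (hA.trans_lt hlt)

/-- if `N` is a `d`-small `FSᵒᵖ`-module, `λ ⊢ n`, and
`Hom_{S_n}(V_λ, N(n)) ≠ 0`, then `λ` has at most `d` parts. -/
theorem parts_le_of_equivariantHom_ne_zero (d : ℕ) (hd : 1 ≤ d) (N : FSopModule)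
    (hN : IsSmall d N) (n : ℕ) [NeZero n] (lam : n.Partition)
    (h : ∃ φ ∈ equivariantHom lam N, φ ≠ 0) :
    Multiset.card lam.parts ≤ d :=
  parts_le_of_equivariantHom_ne_zero_general d N hN n lam h
end

section
/- Let N be a d-small FS^op-module and let S be any finite set. Define the FS^op-module N_S by N_S(E) := N(S ⊔ E) for every nonempty finite set E, with the structure map for a surjection g: E ↠ F given by the structure map of N induced by the surjection id_S ⊔ g: S ⊔ E ↠ S ⊔ F. Then N_S is also d-small. -/
open CategoryTheory

/-- The object `S ⊔ E` of `FS`, for a finite set `S` and `E : FSObj`. -/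
def sumObj (S : Type) [Fintype S] (E : FSObj) : FSObj := ⟨S ⊕ E⟩

/-- The surjection `id_S ⊔ g : S ⊔ E ↠ S ⊔ F` induced by a surjection `g : E ↠ F`. -/
def sumHom (S : Type) [Fintype S] {E F : FSObj} (g : E ⟶ F) : sumObj S E ⟶ sumObj S F :=
  ⟨Sum.map id g.1, Function.surjective_id.sumMap g.2⟩

/-- The shift of an `FSᵒᵖ`-module `N` by a finite set `S`: the `FSᵒᵖ`-module
`N_S` with `N_S(E) := N(S ⊔ E)`, whose structure map for a surjection `g : E ↠ F`
is the structure map of `N` induced by `id_S ⊔ g : S ⊔ E ↠ S ⊔ F`. -/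
def shiftFS (S : Type) [Fintype S] (N : FSopModule) : FSopModule where
  obj E := N.obj (Opposite.op (sumObj S E.unop))
  map {E F} φ := N.map (Quiver.Hom.op (sumHom S φ.unop))
  map_id E := by
    have h : sumHom S (𝟙 E.unop) = 𝟙 (sumObj S E.unop) :=
      Subtype.ext (funext fun x => by cases x <;> rfl)
    show N.map (sumHom S (𝟙 E).unop).op = 𝟙 _
    rw [CategoryTheory.unop_id, h, CategoryTheory.op_id, N.map_id]
  map_comp {E F G} φ ψ := by
    have h : sumHom S ((φ ≫ ψ).unop) = sumHom S ψ.unop ≫ sumHom S φ.unop :=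
      Subtype.ext (funext fun x => by cases x <;> rfl)
    show N.map (sumHom S (φ ≫ ψ).unop).op =
      N.map (sumHom S φ.unop).op ≫ N.map (sumHom S ψ.unop).op
    rw [h, CategoryTheory.op_comp, N.map_comp]


/-! A generator of `P_B(S ⊔ E)` is a surjection `k : S ⊔ E ↠ B`. Letting `n` be the size of
`k(E)`, it factors as `(id_S ⊔ f) ≫ h` with `f : E ↠ [n]` and `h : S ⊔ [n] ↠ B`, so it is the
image of the generator `f` of `P_n(E)` under the map `P_n ⟶ (P_B)_S` induced by `h`. Since
`n ≤ |B|`, the shift of a module generated in degrees `≤ d` is again generated in degrees `≤ d`,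
and shifting, being exact, preserves subquotients. -/

instance (A B : FSObj) : Finite (A ⟶ B) := Subtype.finite

section Shift

variable (S : Type) [Fintype S]

lemma sumHom_comp {E F G : FSObj} (g : E ⟶ F) (g' : F ⟶ G) :
    sumHom S (g ≫ g') = sumHom S g ≫ sumHom S g' :=
  Subtype.ext (funext fun x => by cases x <;> rfl)

def shiftFSMap {M N : FSopModule} (T : M ⟶ N) : shiftFS S M ⟶ shiftFS S N where
  app E := T.app (Opposite.op (sumObj S E.unop))
  naturality _ _ φ := T.naturality (Quiver.Hom.op (sumHom S φ.unop))

noncomputable def PP.toShiftFS {A B : FSObj} (h : sumObj S A ⟶ B) : PP A ⟶ shiftFS S (PP B) where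
  app E := ModuleCat.ofHom (Finsupp.lmapDomain ℂ ℂ (fun f : E.unop ⟶ A => sumHom S f ≫ h))
  naturality E F φ := ModuleCat.hom_ext (Finsupp.lhom_ext fun f c => by
    change Finsupp.mapDomain _ (Finsupp.mapDomain _ _) = Finsupp.mapDomain _ (Finsupp.mapDomain _ _)
    simp only [Finsupp.mapDomain_single, sumHom_comp, Category.assoc]
    rfl)

abbrev ShiftGenerator (B : FSObj) : Type :=
  Σ n : Set.Icc 1 (Fintype.card B), sumObj S (finObj n n.2.1) ⟶ B

lemma exists_sumHom_comp_eq {E B : FSObj} (k : sumObj S E ⟶ B) :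
    ∃ (h : ShiftGenerator S B) (f : E ⟶ finObj h.1 h.1.2.1), sumHom S f ≫ h.2 = k := by
  classical
  let g : E → B := fun e => k.1 (Sum.inr e)
  let e := Fintype.equivFin (Set.range g)
  have hpos : 1 ≤ Fintype.card (Set.range g) := Fintype.card_pos
  refine ⟨⟨⟨_, hpos, set_fintype_card_le_univ _⟩,
    ⟨Sum.elim (fun s => k.1 (Sum.inl s)) (fun j => (e.symm j).1), fun x => ?_⟩⟩,
    ⟨e ∘ Set.rangeFactorization g, e.surjective.comp Set.rangeFactorization_surjective⟩, ?_⟩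
  · obtain ⟨y | y, hy⟩ := k.2 x
    · exact ⟨Sum.inl y, hy⟩
    · exact ⟨Sum.inr (e ⟨x, y, hy⟩), congrArg Subtype.val (e.symm_apply_apply ⟨x, y, hy⟩)⟩
  · refine Subtype.ext (funext fun y => ?_)
    rcases y with s | y
    · rfl
    · exact congrArg Subtype.val (e.symm_apply_apply (Set.rangeFactorization g y))

lemma iSup_range_toShiftFS_app (B : FSObj) (E : FSObjᵒᵖ) :
    ⨆ h : ShiftGenerator S B, LinearMap.range ((PP.toShiftFS S h.2).app E).hom = ⊤ := by
  refine Submodule.eq_top_iff'.2 fun v => ?_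
  induction v using Finsupp.induction_linear with
  | zero => exact zero_mem _
  | add v w hv hw => exact add_mem hv hw
  | single k c =>
    obtain ⟨h, f, rfl⟩ := exists_sumHom_comp_eq S k
    exact Submodule.mem_iSup_of_mem h ⟨Finsupp.single f c, Finsupp.mapDomain_single⟩

end Shift

lemma iSup_range_comp_eq_top {R W : Type*} [Semiring R] [AddCommMonoid W] [Module R W]
    {ι : Type*} {κ : ι → Type*} {V : ι → Type*} {U : ∀ i, κ i → Type*}
    [∀ i, AddCommMonoid (V i)] [∀ i, Module R (V i)]
    [∀ i j, AddCommMonoid (U i j)] [∀ i j, Module R (U i j)]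
    (T : ∀ i, V i →ₗ[R] W) (f : ∀ i j, U i j →ₗ[R] V i)
    (hT : ⨆ i, LinearMap.range (T i) = ⊤) (hf : ∀ i, ⨆ j, LinearMap.range (f i j) = ⊤) :
    ⨆ (i) (j), LinearMap.range (T i ∘ₗ f i j) = ⊤ := by
  simp_rw [LinearMap.range_comp, ← Submodule.map_iSup, hf, Submodule.map_top, hT]

lemma finGenLE_of_finite (d : ℕ) (N : FSopModule) (I : Type) [Finite I]
    (m : I → ℕ) (hm : ∀ i, 1 ≤ m i ∧ m i ≤ d)
    (T : ∀ i : I, PP (finObj (m i) (hm i).1) ⟶ N)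
    (hT : ∀ E : FSObjᵒᵖ, ⨆ i, LinearMap.range ((T i).app E).hom = ⊤) :
    FinGenLE d N := by
  obtain ⟨k, ⟨e⟩⟩ := Finite.exists_equiv_fin I
  refine ⟨k, m ∘ e.symm, fun j => hm (e.symm j), fun j => T (e.symm j), fun E => ?_⟩
  rw [← hT E, ← e.symm.iSup_comp]

lemma finGenLE_shiftFS (S : Type) [Fintype S] (d : ℕ) (M : FSopModule) (hM : FinGenLE d M) :
    FinGenLE d (shiftFS S M) := by
  obtain ⟨k, m, hm, T, hT⟩ := hM
  have hcard (i : Fin k) : Fintype.card (finObj (m i) (hm i).1) = m i := Fintype.card_fin _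
  refine finGenLE_of_finite d _ (Σ i, ShiftGenerator S (finObj (m i) (hm i).1)) (fun x => x.2.1)
    (fun x => ⟨x.2.1.2.1, (x.2.1.2.2.trans_eq (hcard x.1)).trans (hm x.1).2⟩)
    (fun x => PP.toShiftFS S x.2.2 ≫ shiftFSMap S (T x.1)) fun E => ?_
  rw [iSup_sigma]
  exact iSup_range_comp_eq_top (fun i => ((T i).app (Opposite.op (sumObj S E.unop))).hom)
    (fun i (h : ShiftGenerator S _) => ((PP.toShiftFS S h.2).app E).hom) (hT _)
    fun i => iSup_range_toShiftFS_app S _ E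

/-- shift functors preserve smallness: if `N` is a `d`-small
`FSᵒᵖ`-module and `S` is any finite set, then the shifted `FSᵒᵖ`-module
`N_S : E ↦ N(S ⊔ E)` is also `d`-small. -/
theorem isSmall_shiftFS (d : ℕ) (N : FSopModule) (hN : IsSmall d N)
    (S : Type) [Fintype S] : IsSmall d (shiftFS S N) := by
  obtain ⟨M, M₀, hM, ι, π, hι, hπ⟩ := hN
  exact ⟨shiftFS S M, shiftFS S M₀, finGenLE_shiftFS S d M hM, shiftFSMap S ι, shiftFSMap S π,
    fun E => hι _, fun E => hπ _⟩
end

section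
/- The FS^op-module H_1 is finitely generated in degrees ≤ 2. Concretely: for every finite set E with at least 2 elements, the indicator vectors χ_f ∈ ℂ^{P(E)} — where P(E) is the set of 2-element subsets of E and χ_f({i,j}) = 1 if f(i) ≠ f(j) and χ_f({i,j}) = 0 otherwise — taken over all surjections f: E ↠ {1,2}, span the vector space ℂ^{P(E)}. -/
lemma pair_eq_pair_iff' {E : Type} [DecidableEq E] (i j a b : E) :
    ({i,j} : Finset E) = {a,b} ↔ (i = a ∧ j = b ∨ i = b ∧ j = a) := by
  rw [← Finset.coe_inj]; simp [Set.pair_eq_pair_iff]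

lemma chi_eval {E : Type} [DecidableEq E] (f : E → Fin 2) (a b : E) :
    (if (({a,b} : Finset E).image f).card = 2 then (1:ℂ) else 0)
      = if f a = f b then 0 else 1 := by
  rw [Finset.image_insert, Finset.image_singleton]
  by_cases h : f a = f b
  · simp [h]
  · rw [Finset.card_insert_of_notMem (by simp [h]), Finset.card_singleton]
    simp [h]

lemma ind_surj {E : Type} (p : E → Prop) [DecidablePred p] (x y : E) (hx : p x) (hy : ¬ p y) :
    Function.Surjective (fun e => if p e then (1 : Fin 2) else 0) := by
  intro c
  fin_cases c
  · exact ⟨y, by simp [hy]⟩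
  · exact ⟨x, by simp [hx]⟩

set_option maxHeartbeats 800000 in
lemma branch_calc {E : Type} [DecidableEq E] {i j a b : E} (hij : i ≠ j) (hab : a ≠ b) :
    (if (i = a ∧ j = b ∨ i = b ∧ j = a) then (1:ℂ) else 0)
      = (2⁻¹ : ℂ) * (((if (if a = i then (1:Fin 2) else 0) = (if b = i then 1 else 0) then (0:ℂ) else 1)
        + (if (if a = j then (1:Fin 2) else 0) = (if b = j then 1 else 0) then (0:ℂ) else 1))
        - (if (if a = i ∨ a = j then (1:Fin 2) else 0) = (if b = i ∨ b = j then 1 else 0) then (0:ℂ) else 1)) := by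
  rcases eq_or_ne a i with hai | hai <;> rcases eq_or_ne a j with haj | haj <;>
    rcases eq_or_ne b i with hbi | hbi <;> rcases eq_or_ne b j with hbj | hbj <;>
    simp_all <;> norm_num <;> aesop

lemma branch_calc' {E : Type} [DecidableEq E] {i j a b : E} (hij : i ≠ j) (hab : a ≠ b)
    (ha : a = i ∨ a = j) (hb : b = i ∨ b = j) :
    (if (i = a ∧ j = b ∨ i = b ∧ j = a) then (1:ℂ) else 0)
      = if (if a = i then (1:Fin 2) else 0) = (if b = i then 1 else 0) then (0:ℂ) else 1 := by
  rcases ha with ha | ha <;> rcases hb with hb | hb <;> simp_all [Ne.symm hij]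

/-- `H_1` is finitely generated in degrees `≤ 2`: for every finite set
`E` with at least two elements, the indicator vectors `χ_f ∈ ℂ^{P(E)}` — where `P(E)` is
the set of 2-element subsets of `E`, and `χ_f({i,j}) = 1` if `f(i) ≠ f(j)` (equivalently,
the image of `{i,j}` under `f` has two elements) and `χ_f({i,j}) = 0` otherwise — taken
over all surjections `f : E ↠ {1,2}`, span the vector space `ℂ^{P(E)}`. -/
theorem indicator_vectors_span (E : Type) [Fintype E] [DecidableEq E]
    (hE : 2 ≤ Fintype.card E) :
    Submodule.span ℂ
        {χ : {s : Finset E // s.card = 2} → ℂ |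
          ∃ f : E → Fin 2, Function.Surjective f ∧
            χ = fun s => if (s.1.image f).card = 2 then (1 : ℂ) else 0} = ⊤ := by
  rw [eq_top_iff]
  intro v _
  rw [pi_eq_sum_univ v]
  refine Submodule.sum_mem _ fun s _ => Submodule.smul_mem _ _ ?_
  obtain ⟨i, j, hij, hs⟩ := Finset.card_eq_two.mp s.2
  have mem_chi : ∀ (p : E → Prop) [DecidablePred p] (x y : E), p x → ¬ p y →
      (fun t : {s : Finset E // s.card = 2} =>
        if (t.1.image (fun e => if p e then (1 : Fin 2) else 0)).card = 2 then (1:ℂ) else 0)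
        ∈ Submodule.span ℂ
          {χ : {s : Finset E // s.card = 2} → ℂ |
            ∃ f : E → Fin 2, Function.Surjective f ∧
              χ = fun s => if (s.1.image f).card = 2 then (1 : ℂ) else 0} := by
    intro p _ x y hx hy
    exact Submodule.subset_span ⟨_, ind_surj p x y hx hy, rfl⟩
  by_cases hk : ∃ k, k ≠ i ∧ k ≠ j
  · obtain ⟨k, hki, hkj⟩ := hk
    have key : (fun t : {s : Finset E // s.card = 2} => if s = t then (1:ℂ) else 0)
        = (2⁻¹ : ℂ) • (((fun t : {s : Finset E // s.card = 2} =>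
            if (t.1.image (fun e => if e = i then (1 : Fin 2) else 0)).card = 2 then (1:ℂ) else 0)
          + (fun t : {s : Finset E // s.card = 2} =>
            if (t.1.image (fun e => if e = j then (1 : Fin 2) else 0)).card = 2 then (1:ℂ) else 0))
          - (fun t : {s : Finset E // s.card = 2} =>
            if (t.1.image (fun e => if e = i ∨ e = j then (1 : Fin 2) else 0)).card = 2 then (1:ℂ) else 0)) := by
      clear mem_chi
      funext t
      obtain ⟨a, b, hab, ht⟩ := Finset.card_eq_two.mp t.2
      have hst : (s = t) ↔ (i = a ∧ j = b ∨ i = b ∧ j = a) := by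
        rw [← Subtype.coe_inj, hs, ht, pair_eq_pair_iff']
      simp only [Pi.smul_apply, Pi.sub_apply, Pi.add_apply, smul_eq_mul, ht, chi_eval, hst]
      exact branch_calc hij hab
    rw [key]
    exact Submodule.smul_mem _ _ (Submodule.sub_mem _
      (Submodule.add_mem _ (mem_chi (fun e => e = i) i k rfl hki)
        (mem_chi (fun e => e = j) j k rfl hkj))
      (mem_chi (fun e => e = i ∨ e = j) i k (Or.inl rfl) (by tauto)))
  · push_neg at hk
    have key : (fun t : {s : Finset E // s.card = 2} => if s = t then (1:ℂ) else 0)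
        = (fun t : {s : Finset E // s.card = 2} =>
            if (t.1.image (fun e => if e = i then (1 : Fin 2) else 0)).card = 2 then (1:ℂ) else 0) := by
      clear mem_chi
      funext t
      obtain ⟨a, b, hab, ht⟩ := Finset.card_eq_two.mp t.2
      have hst : (s = t) ↔ (i = a ∧ j = b ∨ i = b ∧ j = a) := by
        rw [← Subtype.coe_inj, hs, ht, pair_eq_pair_iff']
      simp only [ht, chi_eval, hst]
      exact branch_calc' hij hab (or_iff_not_imp_left.mpr (hk a)) (or_iff_not_imp_left.mpr (hk b))
    rw [key]
    exact mem_chi (fun e => e = i) i j rfl (Ne.symm hij)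
end
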